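/- arXiv:2503.15116 — 4 statements merged into one kernel-verified Lean document; each statement's English description precedes it below -/
import Mathlib

section
/- Suppose n ≥ (t+1)(k-t+1), q ≥ t+1, n ≥ k > t ≥ 0, and assume (a) any t-intersecting family of k-subsets of an n-set has size at most C(n-t,k-t), and (b) any t-intersecting family of full-weight words of length k over Z_q has size at most (q-1)^(k-t). Then any (t,k)_q-intersecting family of words of length n has size at most C(n-t,k-t)·(q-1)^(k-t). -/
/-!
Group the family by supports. The supports form a `t`-intersecting family of `k`-sets, so there
are at most `C(n-t,k-t)` of them by (a). Words sharing a support `S` are determined by their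
entries on `S`; read on `S`, they form a `t`-intersecting family of full-weight words of length
`k`, so each class has at most `(q-1)^(k-t)` members by (b).
-/

open Finset

theorem Finset.exists_fin_embedding_map_univ_eq {ι : Type*} (S : Finset ι) {k : ℕ}
    (hk : #S = k) : ∃ e : Fin k ↪ ι, univ.map e = S := by
  refine ⟨(Fintype.equivFinOfCardEq (by simpa using hk)).symm.toEmbedding.trans
    (Function.Embedding.subtype (· ∈ S)), ?_⟩
  rw [← map_map, map_univ_equiv, univ_eq_attach, attach_map_val]

namespace Word

variable {ι κ β : Type*} [Fintype ι] [Fintype κ] [Zero β] [DecidableEq β]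

def support (x : ι → β) : Finset ι := univ.filter fun i => x i ≠ 0

def nonzeroAgreement (x y : ι → β) : Finset ι := univ.filter fun i => x i = y i ∧ x i ≠ 0

def agreement (x y : κ → β) : Finset κ := univ.filter fun j => x j = y j

theorem mem_support {x : ι → β} {i : ι} : i ∈ support x ↔ x i ≠ 0 := by
  simp [support]

theorem nonzeroAgreement_subset_inter_support [DecidableEq ι] (x y : ι → β) :
    nonzeroAgreement x y ⊆ support x ∩ support y := by
  intro i hi
  simp only [nonzeroAgreement, mem_filter, mem_univ, true_and] at hi
  simp only [mem_inter, mem_support]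
  exact ⟨hi.2, hi.1 ▸ hi.2⟩

section Restriction

variable {S : Finset ι} (e : κ ↪ ι) (hS : univ.map e = S)
include hS

omit [Fintype ι] [DecidableEq β] in
theorem eq_of_comp_eq_of_support_subset {x y : ι → β} (hxy : x ∘ e = y ∘ e)
    (hx : ∀ i ∉ S, x i = 0) (hy : ∀ i ∉ S, y i = 0) : x = y := by
  funext i
  by_cases hi : i ∈ S
  · obtain ⟨j, -, rfl⟩ := mem_map.1 (hS ▸ hi)
    exact congrFun hxy j
  · rw [hx i hi, hy i hi]

theorem card_nonzeroAgreement_le {x y : ι → β} (hx : support x = S) :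
    #(nonzeroAgreement x y) ≤ #(agreement (x ∘ e) (y ∘ e)) := by
  rw [← card_map e]
  refine card_le_card fun i hi => ?_
  simp only [nonzeroAgreement, mem_filter, mem_univ, true_and] at hi
  have hiS : i ∈ univ.map e := hS ▸ hx ▸ mem_support.2 hi.2
  obtain ⟨j, -, rfl⟩ := mem_map.1 hiS
  simpa [agreement] using hi.1

end Restriction

theorem card_fiber_support_le [DecidableEq ι] {t k B : ℕ} (G : Finset (ι → β))
    (hint : ∀ x ∈ G, ∀ y ∈ G, t ≤ #(nonzeroAgreement x y))
    (hb : ∀ W : Finset (Fin k → β), (∀ w ∈ W, ∀ j, w j ≠ 0) →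
      (∀ u ∈ W, ∀ v ∈ W, t ≤ #(agreement u v)) → #W ≤ B)
    (S : Finset ι) (hk : #S = k) :
    #{x ∈ G | support x = S} ≤ B := by
  set F := {x ∈ G | support x = S}
  obtain ⟨e, hS⟩ := S.exists_fin_embedding_map_univ_eq hk
  have hsupp : ∀ x ∈ F, support x = S := fun x hx => (mem_filter.1 hx).2
  have hzero : ∀ x ∈ F, ∀ i ∉ S, x i = 0 := fun x hx i hi => by
    by_contra h
    exact hi (hsupp x hx ▸ mem_support.2 h)
  have hinj : Set.InjOn (· ∘ e) F := fun x hx y hy hxy =>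
    eq_of_comp_eq_of_support_subset e hS hxy (hzero x hx) (hzero y hy)
  rw [← card_image_of_injOn hinj]
  refine hb _ ?_ ?_
  · rintro _ hw j
    obtain ⟨x, hx, rfl⟩ := mem_image.1 hw
    have hj : e j ∈ support x := hsupp x hx ▸ hS ▸ mem_map_of_mem e (mem_univ j)
    exact (mem_support (x := x)).1 hj
  · rintro _ hu _ hv
    obtain ⟨x, hx, rfl⟩ := mem_image.1 hu
    obtain ⟨y, hy, rfl⟩ := mem_image.1 hv
    exact (hint x (mem_filter.1 hx).1 y (mem_filter.1 hy).1).trans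
      (card_nonzeroAgreement_le e hS (hsupp x hx))

theorem card_le_mul_of_nonzeroAgreement [DecidableEq ι] {t k A B : ℕ} (G : Finset (ι → β))
    (hwt : ∀ x ∈ G, #(support x) = k)
    (hint : ∀ x ∈ G, ∀ y ∈ G, t ≤ #(nonzeroAgreement x y))
    (ha : ∀ H : Finset (Finset ι), (∀ s ∈ H, #s = k) →
      (∀ s ∈ H, ∀ s' ∈ H, t ≤ #(s ∩ s')) → #H ≤ A)
    (hb : ∀ W : Finset (Fin k → β), (∀ w ∈ W, ∀ j, w j ≠ 0) →
      (∀ u ∈ W, ∀ v ∈ W, t ≤ #(agreement u v)) → #W ≤ B) :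
    #G ≤ A * B := by
  have hsupports : #(G.image support) ≤ A := by
    refine ha _ ?_ ?_
    · rintro _ hs
      obtain ⟨x, hx, rfl⟩ := mem_image.1 hs
      exact hwt x hx
    · rintro _ hs _ hs'
      obtain ⟨x, hx, rfl⟩ := mem_image.1 hs
      obtain ⟨y, hy, rfl⟩ := mem_image.1 hs'
      exact (hint x hx y hy).trans (card_le_card (nonzeroAgreement_subset_inter_support x y))
  have hfibers : ∀ S ∈ G.image support, #{x ∈ G | support x = S} ≤ B := by
    intro S hS
    obtain ⟨x, hx, rfl⟩ := mem_image.1 hS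
    exact card_fiber_support_le G hint hb _ (hwt x hx)
  calc #G ≤ B * #(G.image support) := card_le_mul_card_image G B hfibers
    _ ≤ B * A := Nat.mul_le_mul_left B hsupports
    _ = A * B := mul_comm B A

end Word

theorem max_intersecting_family_general (q n k t : ℕ) (hq : 2 ≤ q)
    (ha : ∀ H : Finset (Finset (Fin n)), (∀ s ∈ H, s.card = k) →
      (∀ s ∈ H, ∀ s' ∈ H, t ≤ (s ∩ s').card) → H.card ≤ (n - t).choose (k - t))
    (hb : ∀ W : Finset (Fin k → Fin q),
      (∀ w ∈ W, ∀ i : Fin k, (w i : ℕ) ≠ 0) →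
      (∀ u ∈ W, ∀ v ∈ W, t ≤ (univ.filter (fun i : Fin k => u i = v i)).card) →
      W.card ≤ (q - 1) ^ (k - t))
    (G : Finset (Fin n → Fin q))
    (hwt : ∀ x ∈ G, (univ.filter (fun i : Fin n => (x i : ℕ) ≠ 0)).card = k)
    (hint : ∀ x ∈ G, ∀ y ∈ G,
      t ≤ (univ.filter (fun i : Fin n => x i = y i ∧ (x i : ℕ) ≠ 0)).card) :
    G.card ≤ (n - t).choose (k - t) * (q - 1) ^ (k - t) := by
  have : NeZero q := ⟨by omega⟩
  simp only [Fin.val_ne_zero_iff] at hb hwt hint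
  exact Word.card_le_mul_of_nonzeroAgreement G hwt hint ha hb

/-- Assuming (a) the Erdős–Ko–Rado bound for `t`-intersecting families
of `k`-subsets of an `n`-set and (b) the bound `(q-1)^(k-t)` for `t`-intersecting
families of full-weight words of length `k` over `Z_q`, any `(t,k)_q`-intersecting
family of words of length `n` has size at most `C(n-t,k-t) * (q-1)^(k-t)`. -/
theorem max_intersecting_family (q n k t : ℕ) (hq : 2 ≤ q) (htk : t < k) (hkn : k ≤ n)
    (hn : (t + 1) * (k - t + 1) ≤ n) (hqt : t + 1 ≤ q)
    (ha : ∀ H : Finset (Finset (Fin n)), (∀ s ∈ H, s.card = k) →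
      (∀ s ∈ H, ∀ s' ∈ H, t ≤ (s ∩ s').card) → H.card ≤ (n - t).choose (k - t))
    (hb : ∀ W : Finset (Fin k → Fin q),
      (∀ w ∈ W, ∀ i : Fin k, (w i : ℕ) ≠ 0) →
      (∀ u ∈ W, ∀ v ∈ W, t ≤ (univ.filter (fun i : Fin k => u i = v i)).card) →
      W.card ≤ (q - 1) ^ (k - t))
    (G : Finset (Fin n → Fin q))
    (hwt : ∀ x ∈ G, (univ.filter (fun i : Fin n => (x i : ℕ) ≠ 0)).card = k)
    (hint : ∀ x ∈ G, ∀ y ∈ G,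
      t ≤ (univ.filter (fun i : Fin n => x i = y i ∧ (x i : ℕ) ≠ 0)).card) :
    G.card ≤ (n - t).choose (k - t) * (q - 1) ^ (k - t) :=
  max_intersecting_family_general q n k t hq ha hb G hwt hint
end

section
/- If n ≥ 2k-t-1, then the anticode A_q(t,k,n) has Hamming diameter exactly 2(k-t)-1: any two of its words are at Hamming distance at most 2(k-t)-1, and this distance is attained by some pair. -/
/-!
Two words of `A_q(t,k,n)` agree on the first `t` coordinates, so they can only differ at
coordinate `t+1` and on the union of their tail supports, each of size `k-t-1`; hence the
distance is at most `2(k-t)-1`. Equality holds for two words that differ at coordinate `t+1`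
(this needs a third symbol, hence `q ≥ 3`) and have disjoint tail supports, which fit into the
`n-t-1` tail coordinates because `n ≥ 2k-t-1`. Such a pair already exists over `Fin 3`, which
embeds isometrically into `Fin q`.
-/

open Finset

lemma Fin.card_filter_le_val_le {n a b : ℕ} (hb : b < n) :
    #{i : Fin n | a ≤ (i : ℕ) ∧ (i : ℕ) ≤ b} = b + 1 - a := by
  rw [← card_map Fin.valEmbedding, ← Nat.card_Icc]
  congr 1
  ext j
  simp only [mem_map, mem_filter, mem_univ, true_and, Fin.valEmbedding_apply, mem_Icc]
  exact ⟨fun ⟨i, hi, hij⟩ => hij ▸ hi, fun hj => ⟨⟨j, by omega⟩, hj, rfl⟩⟩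

section Anticode

variable {q n : ℕ}

def tailSupport (t : ℕ) (x : Fin n → Fin q) : Finset (Fin n) :=
  {i | t + 1 ≤ (i : ℕ) ∧ (x i : ℕ) ≠ 0}

/-- Coordinates are indexed from `0`, so coordinate `t` here is coordinate `t+1` of the paper. -/
def anticodeA (q t k n : ℕ) : Finset (Fin n → Fin q) :=
  {x | (∀ i : Fin n, (i : ℕ) < t → (x i : ℕ) = 1) ∧
    (∀ i : Fin n, (i : ℕ) = t → (x i : ℕ) ≠ 0) ∧ #(tailSupport t x) = k - t - 1}

lemma mem_anticodeA_castLE {r t k : ℕ} (hqr : q ≤ r) {x : Fin n → Fin q} :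
    (fun i => Fin.castLE hqr (x i)) ∈ anticodeA r t k n ↔ x ∈ anticodeA q t k n := by
  simp [anticodeA, tailSupport]

variable {t : ℕ} {x y : Fin n → Fin q}

lemma filter_ne_subset_union_tailSupport (hlt : ∀ i : Fin n, (i : ℕ) < t → x i = y i) :
    ({i | x i ≠ y i} : Finset (Fin n)) ⊆
      ({i | (i : ℕ) = t} : Finset (Fin n)) ∪ (tailSupport t x ∪ tailSupport t y) := by
  intro i hi
  simp only [tailSupport, mem_filter, mem_univ, true_and, mem_union] at hi ⊢
  rcases lt_trichotomy (i : ℕ) t with h | h | h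
  · exact absurd (hlt i h) hi
  · exact Or.inl h
  · by_cases hx : (x i : ℕ) = 0
    · exact Or.inr <| Or.inr ⟨h, fun hy => hi (Fin.ext (hx.trans hy.symm))⟩
    · exact Or.inr <| Or.inl ⟨h, hx⟩

lemma filter_ne_eq_union_tailSupport (hlt : ∀ i : Fin n, (i : ℕ) < t → x i = y i)
    (hne : ∀ i : Fin n, (i : ℕ) = t → x i ≠ y i)
    (hdisj : Disjoint (tailSupport t x) (tailSupport t y)) :
    ({i | x i ≠ y i} : Finset (Fin n)) =
      ({i | (i : ℕ) = t} : Finset (Fin n)) ∪ (tailSupport t x ∪ tailSupport t y) := by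
  refine (filter_ne_subset_union_tailSupport hlt).antisymm fun i hi => ?_
  have hx : i ∈ tailSupport t x → i ∉ tailSupport t y := fun h => disjoint_left.1 hdisj h
  have hy : i ∈ tailSupport t y → i ∉ tailSupport t x := fun h => disjoint_right.1 hdisj h
  simp only [tailSupport, mem_union, mem_filter, mem_univ, true_and] at hi hx hy ⊢
  rcases hi with hi | hi | hi
  · exact hne i hi
  · exact fun h => hx hi ⟨hi.1, h ▸ hi.2⟩
  · exact fun h => hy hi ⟨hi.1, h ▸ hi.2⟩

lemma hammingDist_le_one_add_card_tailSupport (hlt : ∀ i : Fin n, (i : ℕ) < t → x i = y i) :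
    hammingDist x y ≤ 1 + (#(tailSupport t x) + #(tailSupport t y)) := by
  have hcard_t : #{i : Fin n | (i : ℕ) = t} ≤ 1 :=
    card_le_one.2 fun a ha b hb => Fin.ext <| (mem_filter.1 ha).2.trans (mem_filter.1 hb).2.symm
  calc hammingDist x y ≤ _ := card_le_card (filter_ne_subset_union_tailSupport hlt)
    _ ≤ _ := card_union_le _ _
    _ ≤ _ := add_le_add hcard_t (card_union_le _ _)

lemma hammingDist_eq_one_add_card_tailSupport (ht : t < n)
    (hlt : ∀ i : Fin n, (i : ℕ) < t → x i = y i)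
    (hne : ∀ i : Fin n, (i : ℕ) = t → x i ≠ y i)
    (hdisj : Disjoint (tailSupport t x) (tailSupport t y)) :
    hammingDist x y = 1 + (#(tailSupport t x) + #(tailSupport t y)) := by
  have hcard_t : #{i : Fin n | (i : ℕ) = t} = 1 :=
    card_eq_one.2 ⟨⟨t, ht⟩, by ext; simp [Fin.ext_iff]⟩
  have hdisj_t : Disjoint ({i | (i : ℕ) = t} : Finset (Fin n))
      (tailSupport t x ∪ tailSupport t y) :=
    disjoint_left.2 fun i hi h => by
      simp only [tailSupport, mem_union, mem_filter] at hi h; omega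
  rw [hammingDist, filter_ne_eq_union_tailSupport hlt hne hdisj, card_union_of_disjoint hdisj_t,
    card_union_of_disjoint hdisj, hcard_t]

lemma hammingDist_le_of_mem_anticodeA {k : ℕ} (hx : x ∈ anticodeA q t k n)
    (hy : y ∈ anticodeA q t k n) : hammingDist x y ≤ 1 + 2 * (k - t - 1) := by
  simp only [anticodeA, mem_filter, mem_univ, true_and] at hx hy
  have := hammingDist_le_one_add_card_tailSupport (t := t) fun i hi =>
    Fin.ext <| (hx.1 i hi).trans (hy.1 i hi).symm
  omega

end Anticode

def blockWord {n : ℕ} (t : ℕ) (a : Fin 3) (lo hi : ℕ) (i : Fin n) : Fin 3 :=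
  if (i : ℕ) < t then 1 else if (i : ℕ) = t then a
  else if lo ≤ (i : ℕ) ∧ (i : ℕ) ≤ hi then 1 else 0

section BlockWord

variable {n t lo hi : ℕ} {a : Fin 3}

lemma tailSupport_blockWord (hlo : t < lo) :
    tailSupport t (blockWord t a lo hi : Fin n → Fin 3) =
      ({i | lo ≤ (i : ℕ) ∧ (i : ℕ) ≤ hi} : Finset (Fin n)) := by
  ext i
  simp only [tailSupport, mem_filter, mem_univ, true_and]
  unfold blockWord
  split_ifs <;> simp <;> omega

lemma blockWord_mem_anticodeA {k : ℕ} (ha : a ≠ 0) (hlo : t < lo) (hhi : hi < n)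
    (hk : hi + 1 - lo = k - t - 1) :
    (blockWord t a lo hi : Fin n → Fin 3) ∈ anticodeA 3 t k n := by
  simp only [anticodeA, mem_filter, mem_univ, true_and]
  refine ⟨fun i h => by simp [blockWord, h], fun i h => ?_, ?_⟩
  · simpa [blockWord, h, Fin.val_eq_zero_iff] using ha
  · rw [tailSupport_blockWord hlo, Fin.card_filter_le_val_le hhi, hk]

end BlockWord

lemma exists_mem_anticodeA_three_hammingDist_eq {t k n : ℕ} (htk : t < k)
    (hn : 2 * k - t - 1 ≤ n) :
    ∃ x ∈ anticodeA 3 t k n, ∃ y ∈ anticodeA 3 t k n,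
      hammingDist x y = 2 * (k - t) - 1 := by
  set m := k - t - 1
  set x : Fin n → Fin 3 := blockWord t 1 (t + 1) (t + m)
  set y : Fin n → Fin 3 := blockWord t 2 (t + m + 1) (t + 2 * m)
  have hx : tailSupport t x =
      ({i | t + 1 ≤ (i : ℕ) ∧ (i : ℕ) ≤ t + m} : Finset (Fin n)) :=
    tailSupport_blockWord (by omega)
  have hy : tailSupport t y =
      ({i | t + m + 1 ≤ (i : ℕ) ∧ (i : ℕ) ≤ t + 2 * m} : Finset (Fin n)) :=
    tailSupport_blockWord (by omega)
  have hdisj : Disjoint (tailSupport t x) (tailSupport t y) := by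
    rw [hx, hy]
    exact disjoint_filter.2 fun i _ h h' => by omega
  refine ⟨x, blockWord_mem_anticodeA (by decide) (by omega) (by omega) (by omega),
    y, blockWord_mem_anticodeA (by decide) (by omega) (by omega) (by omega), ?_⟩
  rw [hammingDist_eq_one_add_card_tailSupport (by omega) (fun i h => ?_) (fun i h => ?_) hdisj,
    hx, hy, Fin.card_filter_le_val_le (by omega), Fin.card_filter_le_val_le (by omega)]
  · omega
  · simp [x, y, blockWord, h]
  · simp [x, y, blockWord, h]

theorem diameter_A_general (q n k t : ℕ) (hq : 3 ≤ q) (htk : t < k)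
    (hn : 2 * k - t - 1 ≤ n) :
    (∀ x ∈ (univ : Finset (Fin n → Fin q)).filter (fun x =>
        (∀ i : Fin n, (i : ℕ) < t → (x i : ℕ) = 1) ∧
        (∀ i : Fin n, (i : ℕ) = t → (x i : ℕ) ≠ 0) ∧
        (univ.filter (fun i : Fin n => t + 1 ≤ (i : ℕ) ∧ (x i : ℕ) ≠ 0)).card
          = k - t - 1),
     ∀ y ∈ (univ : Finset (Fin n → Fin q)).filter (fun x =>
        (∀ i : Fin n, (i : ℕ) < t → (x i : ℕ) = 1) ∧
        (∀ i : Fin n, (i : ℕ) = t → (x i : ℕ) ≠ 0) ∧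
        (univ.filter (fun i : Fin n => t + 1 ≤ (i : ℕ) ∧ (x i : ℕ) ≠ 0)).card
          = k - t - 1),
      hammingDist x y ≤ 2 * (k - t) - 1) ∧
    (∃ x ∈ (univ : Finset (Fin n → Fin q)).filter (fun x =>
        (∀ i : Fin n, (i : ℕ) < t → (x i : ℕ) = 1) ∧
        (∀ i : Fin n, (i : ℕ) = t → (x i : ℕ) ≠ 0) ∧
        (univ.filter (fun i : Fin n => t + 1 ≤ (i : ℕ) ∧ (x i : ℕ) ≠ 0)).card
          = k - t - 1),
     ∃ y ∈ (univ : Finset (Fin n → Fin q)).filter (fun x =>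
        (∀ i : Fin n, (i : ℕ) < t → (x i : ℕ) = 1) ∧
        (∀ i : Fin n, (i : ℕ) = t → (x i : ℕ) ≠ 0) ∧
        (univ.filter (fun i : Fin n => t + 1 ≤ (i : ℕ) ∧ (x i : ℕ) ≠ 0)).card
          = k - t - 1),
      hammingDist x y = 2 * (k - t) - 1) := by
  change (∀ x ∈ anticodeA q t k n, ∀ y ∈ anticodeA q t k n, _) ∧
    ∃ x ∈ anticodeA q t k n, ∃ y ∈ anticodeA q t k n, _
  refine ⟨fun x hx y hy => (hammingDist_le_of_mem_anticodeA hx hy).trans (by omega), ?_⟩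
  obtain ⟨x, hx, y, hy, hxy⟩ := exists_mem_anticodeA_three_hammingDist_eq htk hn
  exact ⟨_, (mem_anticodeA_castLE hq).2 hx, _, (mem_anticodeA_castLE hq).2 hy,
    (hammingDist_comp _ fun _ => Fin.castLE_injective hq).trans hxy⟩

/-- If `n ≥ 2k-t-1`, the anticode `A_q(t,k,n)` has Hamming diameter
exactly `2(k-t)-1`: any two of its words are at Hamming distance at most `2(k-t)-1`,
and this distance is attained by some pair. -/
theorem diameter_A (q n k t : ℕ) (hq : 3 ≤ q) (htk : t < k) (hkn : k ≤ n)
    (hn : 2 * k - t - 1 ≤ n) :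
    (∀ x ∈ (univ : Finset (Fin n → Fin q)).filter (fun x =>
        (∀ i : Fin n, (i : ℕ) < t → (x i : ℕ) = 1) ∧
        (∀ i : Fin n, (i : ℕ) = t → (x i : ℕ) ≠ 0) ∧
        (univ.filter (fun i : Fin n => t + 1 ≤ (i : ℕ) ∧ (x i : ℕ) ≠ 0)).card
          = k - t - 1),
     ∀ y ∈ (univ : Finset (Fin n → Fin q)).filter (fun x =>
        (∀ i : Fin n, (i : ℕ) < t → (x i : ℕ) = 1) ∧
        (∀ i : Fin n, (i : ℕ) = t → (x i : ℕ) ≠ 0) ∧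
        (univ.filter (fun i : Fin n => t + 1 ≤ (i : ℕ) ∧ (x i : ℕ) ≠ 0)).card
          = k - t - 1),
      hammingDist x y ≤ 2 * (k - t) - 1) ∧
    (∃ x ∈ (univ : Finset (Fin n → Fin q)).filter (fun x =>
        (∀ i : Fin n, (i : ℕ) < t → (x i : ℕ) = 1) ∧
        (∀ i : Fin n, (i : ℕ) = t → (x i : ℕ) ≠ 0) ∧
        (univ.filter (fun i : Fin n => t + 1 ≤ (i : ℕ) ∧ (x i : ℕ) ≠ 0)).card
          = k - t - 1),
     ∃ y ∈ (univ : Finset (Fin n → Fin q)).filter (fun x =>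
        (∀ i : Fin n, (i : ℕ) < t → (x i : ℕ) = 1) ∧
        (∀ i : Fin n, (i : ℕ) = t → (x i : ℕ) ≠ 0) ∧
        (univ.filter (fun i : Fin n => t + 1 ≤ (i : ℕ) ∧ (x i : ℕ) ≠ 0)).card
          = k - t - 1),
      hammingDist x y = 2 * (k - t) - 1) :=
  diameter_A_general q n k t hq htk hn
end

section
/- Code-anticode bound: if C and A are sets of weight-k words of length n over Z_q such that any two distinct elements of C are at Hamming distance at least d and any two elements of A are at Hamming distance at most d-1, then |C|·|A| ≤ C(n,k)·(q-1)^k. -/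
/-!
The isometries of Hamming space fixing `0` act transitively on the sphere `X` of words of
weight `k`. Every translate `g • A` of the anticode is again an anticode, so it meets the code
`C` in at most one point. Averaging `#(g • A ∩ C)` over the group, each pair `(a, c) ∈ A × C`
is hit by the same proportion `1 / #X` of group elements, which gives `#C * #A / #X ≤ 1`.
-/

open Finset

section DoubleCounting

variable {G α : Type*} [Group G] [Fintype G] [MulAction G α] [DecidableEq α]

theorem card_filter_smul_eq_of_smul_eq {a c : α} {g₀ : G} (hg₀ : g₀ • a = c) :
    #{g : G | g • a = c} = #{g : G | g • a = a} := by
  refine card_nbij' (g₀⁻¹ * ·) (g₀ * ·) ?_ ?_ ?_ ?_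
  · intro g hg
    simp_all [mul_smul, inv_smul_eq_iff]
  · intro g hg
    simp_all [mul_smul]
  · intro g _; simp
  · intro g _; simp

theorem card_filter_smul_mem {a : α} {S : Finset α} (hS : ∀ s ∈ S, ∃ g : G, g • a = s) :
    #{g : G | g • a ∈ S} = #S * #{g : G | g • a = a} := by
  rw [card_eq_sum_card_fiberwise (s := {g : G | g • a ∈ S}) (f := (· • a)) (t := S)
    fun g hg => (mem_filter.1 hg).2, ← smul_eq_mul, ← sum_const]
  refine sum_congr rfl fun s hs => ?_
  obtain ⟨g₀, hg₀⟩ := hS s hs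
  rw [filter_filter, ← card_filter_smul_eq_of_smul_eq hg₀]
  congr 1
  exact filter_congr fun g _ => ⟨And.right, fun h => ⟨h ▸ hs, h⟩⟩

theorem card_mul_card_le_card_of_transitive {X C A : Finset α}
    (hX : ∀ g : G, ∀ x ∈ X, g • x ∈ X) (htrans : ∀ x ∈ X, ∀ y ∈ X, ∃ g : G, g • x = y)
    (hCX : C ⊆ X) (hAX : A ⊆ X) (hCA : ∀ g : G, #{a ∈ A | g • a ∈ C} ≤ 1) :
    #C * #A ≤ #X := by
  have hfiber : ∀ a ∈ A, #X * #{g : G | g • a ∈ C} = #C * Fintype.card G := by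
    intro a ha
    have hGX : #{g : G | g • a ∈ X} = Fintype.card G := by
      rw [filter_true_of_mem fun g _ => hX g a (hAX ha), card_univ]
    rw [card_filter_smul_mem fun c hc => htrans a (hAX ha) c (hCX hc), ← hGX,
      card_filter_smul_mem fun x hx => htrans a (hAX ha) x hx]
    ring
  have hswap : ∑ g : G, #{a ∈ A | g • a ∈ C} = ∑ a ∈ A, #{g : G | g • a ∈ C} := by
    simp only [card_filter]
    exact sum_comm
  have hsum : ∑ g : G, #{a ∈ A | g • a ∈ C} ≤ Fintype.card G := by
    simpa using sum_le_sum fun g (_ : g ∈ univ) => hCA g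
  refine Nat.le_of_mul_le_mul_right (c := Fintype.card G) ?_ Fintype.card_pos
  calc #C * #A * Fintype.card G = ∑ a ∈ A, #X * #{g : G | g • a ∈ C} := by
        rw [sum_congr rfl hfiber, sum_const, smul_eq_mul]; ring
    _ = #X * ∑ g : G, #{a ∈ A | g • a ∈ C} := by rw [hswap, mul_sum]
    _ ≤ #X * Fintype.card G := Nat.mul_le_mul_left _ hsum

end DoubleCounting

section Hamming

variable {ι β : Type*} [Fintype ι] [DecidableEq β]

theorem hammingDist_comp_perm (σ : Equiv.Perm ι) (x y : ι → β) :
    hammingDist (x ∘ σ) (y ∘ σ) = hammingDist x y :=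
  card_equiv σ (by simp)

variable (ι β) [Zero β]

def hammingIsometriesFixingZero : Subgroup (Equiv.Perm (ι → β)) where
  carrier := {e | e 0 = 0 ∧ ∀ x y, hammingDist (e x) (e y) = hammingDist x y}
  one_mem' := by simp
  mul_mem' := by
    rintro e f ⟨he₀, he⟩ ⟨hf₀, hf⟩
    exact ⟨by simp [he₀, hf₀], fun x y => by simp [he, hf]⟩
  inv_mem' := by
    rintro e ⟨he₀, he⟩
    refine ⟨e.symm_apply_eq.2 he₀.symm, fun x y => ?_⟩
    rw [← he]
    simp

variable {ι β}

theorem hammingDist_smul_isometry (e : hammingIsometriesFixingZero ι β) (x y : ι → β) :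
    hammingDist (e • x) (e • y) = hammingDist x y :=
  e.2.2 x y

theorem hammingNorm_smul_isometry (e : hammingIsometriesFixingZero ι β) (x : ι → β) :
    hammingNorm (e • x) = hammingNorm x := by
  have h := hammingDist_smul_isometry e x 0
  rwa [show e • (0 : ι → β) = 0 from e.2.1, hammingDist_zero_right, hammingDist_zero_right] at h

theorem exists_perm_eq_zero_iff_of_hammingNorm_eq [DecidableEq ι] {x y : ι → β}
    (h : hammingNorm x = hammingNorm y) : ∃ σ : Equiv.Perm ι, ∀ i, x (σ i) = 0 ↔ y i = 0 := by
  have hcard : Fintype.card {i // y i ≠ 0} = Fintype.card {i // x i ≠ 0} := by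
    simpa only [Fintype.card_subtype, hammingNorm] using h.symm
  let e := Fintype.equivOfCardEq hcard
  refine ⟨e.extendSubtype, fun i => not_iff_not.1 ⟨fun hx => ?_, e.extendSubtype_mem i⟩⟩
  by_contra hy
  exact e.extendSubtype_not_mem i (not_not.2 hy) hx

/-- First permute the coordinates so that the supports agree, then on each coordinate swap
the two letters; both zero or both nonzero, the swap fixes `0`. -/
theorem exists_isometry_smul_eq_of_hammingNorm_eq [DecidableEq ι] {x y : ι → β}
    (h : hammingNorm x = hammingNorm y) :
    ∃ e : hammingIsometriesFixingZero ι β, e • x = y := by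
  obtain ⟨σ, hσ⟩ := exists_perm_eq_zero_iff_of_hammingNorm_eq h
  let permute : Equiv.Perm (ι → β) := σ.symm.arrowCongr (Equiv.refl β)
  let fix : Equiv.Perm (ι → β) := Equiv.piCongrRight fun i => Equiv.swap (x (σ i)) (y i)
  refine ⟨⟨fix * permute, ?_⟩, ?_⟩
  · refine Subgroup.mul_mem _ ⟨?_, fun u v => ?_⟩ ⟨rfl, fun u v => hammingDist_comp_perm σ u v⟩
    · ext i
      have := hσ i
      simp only [fix, Equiv.piCongrRight_apply, Pi.map_apply, Pi.zero_apply, Equiv.swap_apply_def]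
      split_ifs <;> simp_all [eq_comm]
    · exact hammingDist_comp (fun i => Equiv.swap (x (σ i)) (y i)) fun i => Equiv.injective _
  · ext i
    simp [permute, fix]

variable [DecidableEq ι] [Fintype β]

theorem card_filter_support_eq (s : Finset ι) :
    #{x : ι → β | ({i | x i ≠ 0} : Finset ι) = s} = (Fintype.card β - 1) ^ #s := by
  have hpi : ({x : ι → β | ({i | x i ≠ 0} : Finset ι) = s} : Finset (ι → β))
      = Fintype.piFinset fun i => if i ∈ s then univ.erase 0 else {0} := by
    ext x
    simp only [mem_filter, mem_univ, true_and, Fintype.mem_piFinset, Finset.ext_iff]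
    refine forall_congr' fun i => ?_
    split_ifs with hi <;> simp [hi]
  rw [hpi, Fintype.card_piFinset]
  simp [apply_ite card, card_erase_of_mem, prod_ite_mem]

theorem card_filter_hammingNorm_eq (k : ℕ) :
    #{x : ι → β | hammingNorm x = k} = (Fintype.card ι).choose k * (Fintype.card β - 1) ^ k := by
  rw [card_eq_sum_card_fiberwise (f := fun x : ι → β => ({i | x i ≠ 0} : Finset ι))
    (t := powersetCard k univ) fun x hx => by simpa [hammingNorm] using hx]
  rw [sum_congr rfl fun s hs => ?_, sum_const, card_powersetCard, card_univ, smul_eq_mul]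
  rw [← (mem_powersetCard_univ.1 hs), ← card_filter_support_eq s, filter_filter]
  refine congrArg card (filter_congr fun x _ => and_iff_right_of_imp fun hx => ?_)
  rw [hammingNorm, hx]

end Hamming

theorem code_anticode_bound_general (q n k d : ℕ) (hq : 2 ≤ q) (hd : 1 ≤ d)
    (C A : Finset (Fin n → Fin q))
    (hCwt : ∀ x ∈ C, (univ.filter (fun i : Fin n => (x i : ℕ) ≠ 0)).card = k)
    (hAwt : ∀ x ∈ A, (univ.filter (fun i : Fin n => (x i : ℕ) ≠ 0)).card = k)
    (hC : ∀ x ∈ C, ∀ y ∈ C, x ≠ y → d ≤ hammingDist x y)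
    (hA : ∀ x ∈ A, ∀ y ∈ A, hammingDist x y ≤ d - 1) :
    C.card * A.card ≤ n.choose k * (q - 1) ^ k := by
  classical
  have : NeZero q := ⟨by omega⟩
  have hwt : ∀ x : Fin n → Fin q, #{i | (x i : ℕ) ≠ 0} = hammingNorm x := fun x => by
    simp only [hammingNorm, Fin.val_ne_zero_iff]
  have hX := card_filter_hammingNorm_eq (ι := Fin n) (β := Fin q) k
  rw [Fintype.card_fin, Fintype.card_fin] at hX
  rw [← hX]
  refine card_mul_card_le_card_of_transitive (G := hammingIsometriesFixingZero (Fin n) (Fin q))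
    (fun e x hx => ?_) (fun x hx y hy => ?_) (fun x hx => ?_) (fun x hx => ?_) fun e => ?_
  · simpa [hammingNorm_smul_isometry] using hx
  · exact exists_isometry_smul_eq_of_hammingNorm_eq (by simp_all)
  · simpa [← hwt] using hCwt x hx
  · simpa [← hwt] using hAwt x hx
  · refine card_le_one.2 fun a ha b hb => by_contra fun hab => ?_
    simp only [mem_filter] at ha hb
    have hfar := hC _ ha.2 _ hb.2 fun h => hab (smul_left_cancel e h)
    have hclose := hA _ ha.1 _ hb.1
    rw [hammingDist_smul_isometry] at hfar
    omega

/-- Code-anticode bound. If `C` and `A` are sets of weight-`k` words of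
length `n` over `Z_q` such that any two distinct elements of `C` are at Hamming
distance at least `d` and any two elements of `A` are at Hamming distance at most
`d-1`, then `|C| * |A| ≤ C(n,k) * (q-1)^k`. -/
theorem code_anticode_bound (q n k d : ℕ) (hq : 2 ≤ q) (hkn : k ≤ n) (hd : 1 ≤ d)
    (C A : Finset (Fin n → Fin q))
    (hCwt : ∀ x ∈ C, (univ.filter (fun i : Fin n => (x i : ℕ) ≠ 0)).card = k)
    (hAwt : ∀ x ∈ A, (univ.filter (fun i : Fin n => (x i : ℕ) ≠ 0)).card = k)
    (hC : ∀ x ∈ C, ∀ y ∈ C, x ≠ y → d ≤ hammingDist x y)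
    (hA : ∀ x ∈ A, ∀ y ∈ A, hammingDist x y ≤ d - 1) :
    C.card * A.card ≤ n.choose k * (q - 1) ^ k :=
  code_anticode_bound_general q n k d hq hd C A hCwt hAwt hC hA
end

section
/- For fixed q ≥ 2, k > t ≥ 0, the polynomial inequality (q-1)^k · Σ_{i=t+2}^{k} C(k,i)·C(n-k,k-i) < C(n-t-1,k-t-1)·(q-1)^(k-t) holds for all n > (q-1)^t·(k-t-1)^2·C(k,⌊k/2⌋) + 2k-t-2. -/
/-!
Every term of the sum is at most `C(k, ⌊k/2⌋) · C(n-k, k-t-2)`, because `C(n-k, ·)` increases up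
to `(n-k)/2` and `n` is large; so the sum is at most `(k-t-1) · C(k, ⌊k/2⌋) · C(n-k, k-t-2)`.
After cancelling `(q-1)^(k-t)`, the hypothesis on `n` makes `(n-k+1) · C(n-k, k-t-2)`
exceed `(q-1)^t (k-t-1)` times this bound, and `(n-k+1) · C(n-k, k-t-2)` equals
`(k-t-1) · C(n-k+1, k-t-1) ≤ (k-t-1) · C(n-t-1, k-t-1)`.
-/

open Finset

theorem Nat.choose_le_choose_of_le_of_le_half {n r s : ℕ} (hrs : r ≤ s) (hs : s ≤ n / 2) :
    n.choose r ≤ n.choose s := by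
  induction s, hrs using Nat.le_induction with
  | base => rfl
  | succ s _ ih => exact (ih (by omega)).trans (Nat.choose_le_succ_of_lt_half_left (by omega))

theorem sum_Icc_choose_mul_choose_le (k s m : ℕ) (hm : 2 * (k - s) ≤ m) :
    ∑ i ∈ Icc s k, k.choose i * m.choose (k - i)
      ≤ (k + 1 - s) * (k.choose (k / 2) * m.choose (k - s)) := by
  calc ∑ i ∈ Icc s k, k.choose i * m.choose (k - i)
      ≤ ∑ _i ∈ Icc s k, k.choose (k / 2) * m.choose (k - s) := by
        refine sum_le_sum fun i hi => Nat.mul_le_mul (Nat.choose_le_middle i k) ?_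
        exact Nat.choose_le_choose_of_le_of_le_half (by grind) (by omega)
    _ = (k + 1 - s) * (k.choose (k / 2) * m.choose (k - s)) := by
        rw [sum_const, Nat.card_Icc, smul_eq_mul]

theorem mul_sum_Icc_choose_mul_choose_lt (c k t n : ℕ) (hc : 0 < c) (htk : t + 1 < k)
    (hn : c * (k - t - 1) ^ 2 * k.choose (k / 2) + 2 * k - t - 2 < n) :
    c * ∑ i ∈ Icc (t + 2) k, k.choose i * (n - k).choose (k - i)
      < (n - t - 1).choose (k - t - 1) := by
  obtain ⟨r, hr⟩ : ∃ r, k - (t + 2) = r := ⟨_, rfl⟩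
  rw [show k - t - 1 = r + 1 by omega] at hn ⊢
  set M := k.choose (k / 2)
  set m := n - k
  have hM : 0 < M := Nat.choose_pos (Nat.div_le_self _ _)
  have hnm : c * (r + 1) ^ 2 * M < m + 1 := by omega
  have hrm : 2 * r ≤ m := by
    have : (r + 1) ^ 2 ≤ c * (r + 1) ^ 2 * M :=
      (Nat.le_mul_of_pos_left _ hc).trans (Nat.le_mul_of_pos_right _ hM)
    nlinarith
  have hsum := sum_Icc_choose_mul_choose_le k (t + 2) m (by omega)
  rw [show k + 1 - (t + 2) = r + 1 by omega, hr] at hsum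
  refine Nat.lt_of_mul_lt_mul_left (a := r + 1) ?_
  calc (r + 1) * (c * ∑ i ∈ Icc (t + 2) k, k.choose i * m.choose (k - i))
      ≤ (r + 1) * (c * ((r + 1) * (M * m.choose r))) := by gcongr
    _ = c * (r + 1) ^ 2 * M * m.choose r := by ring
    _ < (m + 1) * m.choose r := Nat.mul_lt_mul_of_pos_right hnm (Nat.choose_pos (by omega))
    _ = (r + 1) * (m + 1).choose (r + 1) := by rw [Nat.add_one_mul_choose_eq, mul_comm]
    _ ≤ (r + 1) * (n - t - 1).choose (r + 1) := by gcongr; omega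

/-- For fixed `q ≥ 2`, `k > t+1`, the inequality
`(q-1)^k · Σ_{i=t+2}^{k} C(k,i)·C(n-k,k-i) < C(n-t-1,k-t-1)·(q-1)^(k-t)`
holds for all `n > (q-1)^t·(k-t-1)^2·C(k,⌊k/2⌋) + 2k-t-2`. -/
theorem polynomial_inequality (q k t : ℕ) (hq : 2 ≤ q) (htk : t + 1 < k) :
    ∀ n : ℕ, (q - 1) ^ t * (k - t - 1) ^ 2 * k.choose (k / 2) + 2 * k - t - 2 < n →
      (q - 1) ^ k * ∑ i ∈ Icc (t + 2) k, k.choose i * (n - k).choose (k - i)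
        < (n - t - 1).choose (k - t - 1) * (q - 1) ^ (k - t) := by
  intro n hn
  have hq1 : 0 < q - 1 := by omega
  have hsplit : (q - 1) ^ k = (q - 1) ^ (k - t) * (q - 1) ^ t := by
    rw [← pow_add, Nat.sub_add_cancel (by omega)]
  rw [hsplit, mul_assoc, mul_comm _ ((q - 1) ^ (k - t))]
  exact Nat.mul_lt_mul_of_pos_left
    (mul_sum_Icc_choose_mul_choose_lt _ k t n (pow_pos hq1 t) htk hn) (pow_pos hq1 _)
end
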